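/- Let k ≥ 3 be an integer, R > 0, ξ = 2π/(3k) and r = R·cos ξ, and let P_0,…,P_{k−1} be the pearl regions. If x ∈ ℝ^2 is a (k,R)-tiara for distinct points x_1,…,x_m (all distinct from x), then in the Gabriel graph of the point set {x, x_1,…,x_m} the degree of x is at least k. -/

import Mathlib

open MeasureTheory Real

noncomputable section

/-- The Euclidean plane. -/
abbrev E2 := EuclideanSpace ℝ (Fin 2)

/-- The polar angle of a point of the plane, normalized to lie in `[0, 2π)` for
nonzero points. -/
def polarAngle (z : E2) : ℝ :=
  if Complex.arg ⟨z 0, z 1⟩ < 0 then Complex.arg ⟨z 0, z 1⟩ + 2 * π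
  else Complex.arg ⟨z 0, z 1⟩

/-- With `ξ = 2π/(3k)` and `r = R cos ξ`, the `i`-th pearl region is the set of points
`z` with `r ≤ |z| ≤ R` whose polar angle lies in `[3iξ, (3i+2)ξ)`. -/
def pearl (k : ℕ) (R : ℝ) (i : ℕ) : Set E2 :=
  {z | R * Real.cos (2 * π / (3 * k)) ≤ ‖z‖ ∧ ‖z‖ ≤ R ∧
    polarAngle z ∈ Set.Ico (3 * i * (2 * π / (3 * k))) ((3 * i + 2) * (2 * π / (3 * k)))}

/-- Gabriel adjacency: `i` and `j` are adjacent iff no third point lies in the open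
disk whose diameter is the segment from `X i` to `X j`. -/
def gabrielAdj {n : ℕ} (X : Fin n → E2) (i j : Fin n) : Prop :=
  i ≠ j ∧ ∀ k : Fin n, k ≠ i → k ≠ j →
    dist (X i) (X j) / 2 ≤ dist (X k) (midpoint ℝ (X i) (X j))

/-- Degree of vertex `i` in the Gabriel graph of the points `X`. -/
def gabrielDeg {n : ℕ} (X : Fin n → E2) (i : Fin n) : ℕ :=
  Nat.card {j : Fin n // gabrielAdj X i j}

/-- `x` is a `(k,R)`-tiara for the points `p 0, …, p (m-1)`: exactly `k` of the points
lie in the closed disk of radius `R` centered at `x`, and each translated pearl region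
`x + P i` contains exactly one of these points. -/
def IsTiara (k : ℕ) (R : ℝ) {m : ℕ} (x : E2) (p : Fin m → E2) : Prop :=
  Nat.card {j : Fin m // dist x (p j) ≤ R} = k ∧
  ∀ i : Fin k, ∃! j : Fin m, p j - x ∈ pearl k R i

/-! The pearl points `a` of a tiara (taken relative to `x`) are Gabriel neighbours of `x`.
A point `b` strictly inside the disk with diameter `[0, a]` satisfies `‖b‖² < ⟪b, a⟫`, so
`‖b‖ < ‖a‖ ≤ R`; as the closed `R`-disk around `x` holds only the `k` pearl points, `b` is the
pearl point of another pearl. But points of distinct pearls are at angle at least `ξ` as seen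
from `0`, whence `⟪b, a⟫ ≤ ‖b‖ ‖a‖ cos ξ ≤ ‖b‖ R cos ξ ≤ ‖b‖²`. -/

open Function InnerProductSpace

lemma norm_eq_norm_complex (z : E2) : ‖z‖ = ‖(⟨z 0, z 1⟩ : ℂ)‖ := by
  rw [EuclideanSpace.norm_eq, Complex.norm_def, Complex.normSq_mk, Fin.sum_univ_two,
    Real.norm_eq_abs, Real.norm_eq_abs, sq_abs, sq_abs, sq, sq]

lemma norm_mul_cos_polarAngle (z : E2) : ‖z‖ * cos (polarAngle z) = z 0 := by
  rw [norm_eq_norm_complex, polarAngle]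
  split_ifs <;> simp only [cos_add_two_pi, Complex.norm_mul_cos_arg]

lemma norm_mul_sin_polarAngle (z : E2) : ‖z‖ * sin (polarAngle z) = z 1 := by
  rw [norm_eq_norm_complex, polarAngle]
  split_ifs <;> simp only [sin_add_two_pi, Complex.norm_mul_sin_arg]

lemma real_inner_eq_norm_mul_norm_mul_cos_polarAngle_sub (u v : E2) :
    ⟪u, v⟫_ℝ = ‖u‖ * ‖v‖ * cos (polarAngle v - polarAngle u) := by
  have hu0 := norm_mul_cos_polarAngle u
  have hu1 := norm_mul_sin_polarAngle u
  have hv0 := norm_mul_cos_polarAngle v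
  have hv1 := norm_mul_sin_polarAngle v
  rw [cos_sub, PiLp.inner_apply, Fin.sum_univ_two]
  simp only [RCLike.inner_apply, conj_trivial]
  linear_combination (-(‖v‖ * cos (polarAngle v))) * hu0 - u 0 * hv0
    - ‖v‖ * sin (polarAngle v) * hu1 - u 1 * hv1

section Sectors

variable {ξ θ θ' : ℝ} {i i' : ℕ}

lemma le_sub_of_mem_Ico_of_lt (hξ : 0 ≤ ξ) (hii' : i < i')
    (hθ : θ ∈ Set.Ico (3 * i * ξ) ((3 * i + 2) * ξ))
    (hθ' : θ' ∈ Set.Ico (3 * i' * ξ) ((3 * i' + 2) * ξ)) : ξ ≤ θ' - θ := by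
  have : (i : ℝ) + 1 ≤ i' := by exact_mod_cast hii'
  nlinarith [hθ.2, hθ'.1]

lemma sub_le_of_mem_Ico_of_lt {k : ℕ} (hξ : 0 ≤ ξ) (hi'k : i' < k)
    (hθ : θ ∈ Set.Ico (3 * i * ξ) ((3 * i + 2) * ξ))
    (hθ' : θ' ∈ Set.Ico (3 * i' * ξ) ((3 * i' + 2) * ξ)) : θ' - θ ≤ (3 * k - 1) * ξ := by
  have : (i' : ℝ) + 1 ≤ k := by exact_mod_cast hi'k
  nlinarith [hθ.1, hθ'.2, (Nat.cast_nonneg i : (0 : ℝ) ≤ i)]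

end Sectors

lemma cos_le_cos_of_mem_Icc {ξ d : ℝ} (hξ : 0 ≤ ξ) (hd : d ∈ Set.Icc ξ (2 * π - ξ)) :
    cos d ≤ cos ξ := by
  rcases le_total d π with hdπ | hπd
  · exact cos_le_cos_of_nonneg_of_le_pi hξ hdπ hd.1
  · rw [← cos_two_pi_sub]
    exact cos_le_cos_of_nonneg_of_le_pi hξ (by linarith) (by linarith [hd.2])

lemma eq_of_mem_pearl {k : ℕ} {R : ℝ} {i i' : Fin k} {z : E2} (hi : z ∈ pearl k R i)
    (hi' : z ∈ pearl k R i') : i = i' := by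
  have hξ : 0 < 2 * π / (3 * k) := by have := i.pos; positivity
  by_contra hne
  rcases Fin.lt_or_lt_of_ne hne with h | h
  · linarith [le_sub_of_mem_Ico_of_lt hξ.le h hi.2.2 hi'.2.2]
  · linarith [le_sub_of_mem_Ico_of_lt hξ.le h hi'.2.2 hi.2.2]

lemma cos_polarAngle_sub_le_of_mem_pearl {k : ℕ} {R : ℝ} {i i' : Fin k} (hii' : i ≠ i')
    {a b : E2} (ha : a ∈ pearl k R i) (hb : b ∈ pearl k R i') :
    cos (polarAngle a - polarAngle b) ≤ cos (2 * π / (3 * k)) := by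
  set ξ := 2 * π / (3 * k) with hξ_def
  have hξ : 0 ≤ ξ := by positivity
  have hk : (k : ℝ) ≠ 0 := by exact_mod_cast i.pos.ne'
  have hkξ : (3 * k - 1) * ξ = 2 * π - ξ := by rw [hξ_def]; field_simp
  rcases Fin.lt_or_lt_of_ne hii' with h | h
  · rw [← cos_neg, neg_sub]
    refine cos_le_cos_of_mem_Icc hξ ⟨le_sub_of_mem_Ico_of_lt hξ h ha.2.2 hb.2.2, ?_⟩
    exact hkξ ▸ sub_le_of_mem_Ico_of_lt hξ i'.isLt ha.2.2 hb.2.2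
  · refine cos_le_cos_of_mem_Icc hξ ⟨le_sub_of_mem_Ico_of_lt hξ h hb.2.2 ha.2.2, ?_⟩
    exact hkξ ▸ sub_le_of_mem_Ico_of_lt hξ i.isLt hb.2.2 ha.2.2

lemma real_inner_le_norm_sq_of_mem_pearl {k : ℕ} {R : ℝ} {i i' : Fin k} (hii' : i ≠ i')
    {a b : E2} (ha : a ∈ pearl k R i) (hb : b ∈ pearl k R i') : ⟪b, a⟫_ℝ ≤ ‖b‖ ^ 2 := by
  have hk : (2 : ℝ) ≤ k := by exact_mod_cast (by omega : 2 ≤ k)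
  have hξ : 0 ≤ 2 * π / (3 * k) := by positivity
  have hξπ : 2 * π / (3 * k) ≤ π / 2 := by
    rw [div_le_div_iff₀ (by positivity) two_pos]; nlinarith [pi_pos]
  have hcos : 0 ≤ cos (2 * π / (3 * k)) := cos_nonneg_of_mem_Icc ⟨by linarith [pi_pos], hξπ⟩
  calc ⟪b, a⟫_ℝ = ‖b‖ * ‖a‖ * cos (polarAngle a - polarAngle b) :=
        real_inner_eq_norm_mul_norm_mul_cos_polarAngle_sub b a
    _ ≤ ‖b‖ * ‖a‖ * cos (2 * π / (3 * k)) := by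
        gcongr; exact cos_polarAngle_sub_le_of_mem_pearl hii' ha hb
    _ ≤ ‖b‖ * (R * cos (2 * π / (3 * k))) := by
        rw [mul_assoc]; gcongr; exact ha.2.1
    _ ≤ ‖b‖ ^ 2 := by rw [sq]; gcongr; exact hb.1

section Thales

variable {V : Type*} [NormedAddCommGroup V] [InnerProductSpace ℝ V]

lemma real_inner_sub_sub_eq_dist_midpoint_sq_sub (x y z : V) :
    ⟪z - x, z - y⟫_ℝ = dist z (midpoint ℝ x y) ^ 2 - (dist x y / 2) ^ 2 := by
  set u := z - midpoint ℝ x y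
  set d := (2⁻¹ : ℝ) • (y - x)
  have hu : z - x = u + d := by simp only [u, d, midpoint_eq_smul_add, invOf_eq_inv]; module
  have hv : z - y = u - d := by simp only [u, d, midpoint_eq_smul_add, invOf_eq_inv]; module
  have hz : dist z (midpoint ℝ x y) = ‖u‖ := dist_eq_norm _ _
  have hd : dist x y / 2 = ‖d‖ := by
    rw [norm_smul, dist_eq_norm', Real.norm_of_nonneg (by norm_num)]; ring
  rw [hu, hv, hz, hd]
  clear_value u d
  rw [inner_add_left, inner_sub_right, inner_sub_right, real_inner_comm u d,
    real_inner_self_eq_norm_sq, real_inner_self_eq_norm_sq]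
  ring

lemma real_inner_sub_sub_neg_of_dist_midpoint_lt {x y z : V}
    (h : dist z (midpoint ℝ x y) < dist x y / 2) : ⟪z - x, z - y⟫_ℝ < 0 := by
  rw [real_inner_sub_sub_eq_dist_midpoint_sq_sub, sub_neg]
  exact pow_lt_pow_left₀ h dist_nonneg two_ne_zero

end Thales

lemma gabrielAdj_cons_zero_succ_iff {m : ℕ} {x : E2} {p : Fin m → E2} {j : Fin m} :
    gabrielAdj (Fin.cons x p) 0 j.succ ↔
      ∀ j' ≠ j, dist x (p j) / 2 ≤ dist (p j') (midpoint ℝ x (p j)) := by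
  simp [gabrielAdj, Fin.forall_fin_succ, (Fin.succ_ne_zero j).symm]

namespace IsTiara

variable {k m : ℕ} {R : ℝ} {x : E2} {p : Fin m → E2}

def pearlPoint (h : IsTiara k R x p) (i : Fin k) : Fin m := (h.2 i).exists.choose

lemma pearlPoint_mem (h : IsTiara k R x p) (i : Fin k) : p (h.pearlPoint i) - x ∈ pearl k R i :=
  (h.2 i).exists.choose_spec

lemma pearlPoint_injective (h : IsTiara k R x p) : Injective h.pearlPoint := fun i i' hii' =>
  eq_of_mem_pearl (h.pearlPoint_mem i) (hii' ▸ h.pearlPoint_mem i')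

lemma exists_mem_pearl_of_dist_le (h : IsTiara k R x p) {j : Fin m} (hj : dist x (p j) ≤ R) :
    ∃ i : Fin k, p j - x ∈ pearl k R i := by
  let g : Fin k → {j : Fin m // dist x (p j) ≤ R} := fun i =>
    ⟨h.pearlPoint i, by rw [dist_eq_norm']; exact (h.pearlPoint_mem i).2.1⟩
  have hg : Bijective g := (Nat.bijective_iff_injective_and_card g).2
    ⟨fun i i' e => h.pearlPoint_injective (congrArg Subtype.val e), by rw [Nat.card_fin, h.1]⟩
  obtain ⟨i, hi⟩ := hg.2 ⟨j, hj⟩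
  have hij : h.pearlPoint i = j := congrArg Subtype.val hi
  exact ⟨i, hij ▸ h.pearlPoint_mem i⟩

lemma gabrielAdj_of_mem_pearl (h : IsTiara k R x p) {i : Fin k} {j : Fin m}
    (hj : p j - x ∈ pearl k R i) : gabrielAdj (Fin.cons x p) 0 j.succ := by
  refine gabrielAdj_cons_zero_succ_iff.2 fun j' hj' => le_of_not_gt fun hlt => ?_
  have hthales := real_inner_sub_sub_neg_of_dist_midpoint_lt hlt
  rw [← sub_sub_sub_cancel_right (p j') (p j) x] at hthales
  set a := p j - x
  set b := p j' - x
  have hba : ‖b‖ ^ 2 < ⟪b, a⟫_ℝ := by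
    rwa [inner_sub_right, real_inner_self_eq_norm_sq, sub_neg] at hthales
  have hb_lt : ‖b‖ < ‖a‖ := by
    refine lt_of_mul_lt_mul_left ?_ (norm_nonneg b)
    rw [← sq]
    exact hba.trans_le (real_inner_le_norm b a)
  obtain ⟨i', hi'⟩ := h.exists_mem_pearl_of_dist_le (j := j')
    (by rw [dist_eq_norm']; exact (hb_lt.trans_le hj.2.1).le)
  have hii' : i ≠ i' := by rintro rfl; exact hj' ((h.2 i).unique hi' hj)
  exact (real_inner_le_norm_sq_of_mem_pearl hii' hj hi').not_gt hba

end IsTiara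

theorem tiara_gabriel_degree_general (k m : ℕ) (R : ℝ)
    (x : E2) (p : Fin m → E2)
    (htiara : IsTiara k R x p) :
    k ≤ gabrielDeg (Fin.cons x p) 0 := by
  let f : Fin k → {j // gabrielAdj (Fin.cons x p) 0 j} := fun i =>
    ⟨(htiara.pearlPoint i).succ, htiara.gabrielAdj_of_mem_pearl (htiara.pearlPoint_mem i)⟩
  have hf : Injective f := fun i i' e =>
    htiara.pearlPoint_injective (Fin.succ_injective _ (congrArg Subtype.val e))
  simpa [gabrielDeg] using Nat.card_le_card_of_injective f hf

/-- If `x` is a `(k,R)`-tiara for distinct points `p 0, …, p (m-1)`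
(all distinct from `x`), with `k ≥ 3` and `R > 0`, then in the Gabriel graph of the
point set `{x, p 0, …, p (m-1)}` the degree of `x` is at least `k`. -/
theorem tiara_gabriel_degree (k m : ℕ) (hk : 3 ≤ k) (R : ℝ) (hR : 0 < R)
    (x : E2) (p : Fin m → E2) (hinj : Function.Injective p) (hx : ∀ j, p j ≠ x)
    (htiara : IsTiara k R x p) :
    k ≤ gabrielDeg (Fin.cons x p) 0 :=
  tiara_gabriel_degree_general k m R x p htiara
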